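/- arXiv:1707.01158 — 4 statements merged into one kernel-verified Lean document; each statement's English description precedes it below -/
import Mathlib

section
/- Let σ₀ = (1,3,8)(2,7,4)(5,11,9)(6,12,10), σ₁ = (1,2)(3,5)(4,6)(7,10)(8,9)(11,12), and σ_∞ = (1,4,10,2,8,11,6,7,12,5)(3,9) be permutations in the symmetric group on {1,…,12}. Then σ_∞ ∘ σ₁ ∘ σ₀ is the identity permutation. -/
/-- Monodromy permutation above `j = 0` in case I, acting on `{1, …, 12} ⊂ Fin 13`. -/
def caseI_σ₀ : Equiv.Perm (Fin 13) :=
  c[1, 3, 8] * c[2, 7, 4] * c[5, 11, 9] * c[6, 12, 10]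

/-- Monodromy permutation above `j = 1728` in case I. -/
def caseI_σ₁ : Equiv.Perm (Fin 13) :=
  c[1, 2] * c[3, 5] * c[4, 6] * c[7, 10] * c[8, 9] * c[11, 12]

/-- Monodromy permutation above `j = ∞` in case I. -/
def caseI_σinf : Equiv.Perm (Fin 13) :=
  c[1, 4, 10, 2, 8, 11, 6, 7, 12, 5] * c[3, 9]

set_option maxRecDepth 10000 in
/-- The product `σ_∞ ∘ σ₁ ∘ σ₀` of the case I monodromy permutations is the identity. -/
theorem caseI_monodromy_product :
    caseI_σinf * caseI_σ₁ * caseI_σ₀ = 1 := by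
  decide
end

section
/- The subgroup of the symmetric group S₁₂ generated by the permutations σ₀ = (1,3,8)(2,7,4)(5,11,9)(6,12,10) and σ₁ = (1,2)(3,5)(4,6)(7,10)(8,9)(11,12) acts transitively on {1,…,12}. -/
lemma caseI_reach_one : ∀ i : Fin 13, i ≠ 0 →
    ∃ g ∈ Subgroup.closure ({caseI_σ₀, caseI_σ₁} : Set (Equiv.Perm (Fin 13))), g 1 = i := by
  have h0 : caseI_σ₀ ∈ Subgroup.closure ({caseI_σ₀, caseI_σ₁} : Set (Equiv.Perm (Fin 13))) :=
    Subgroup.subset_closure (by simp)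
  have h1 : caseI_σ₁ ∈ Subgroup.closure ({caseI_σ₀, caseI_σ₁} : Set (Equiv.Perm (Fin 13))) :=
    Subgroup.subset_closure (by simp)
  intro i hi
  fin_cases i
  · exact absurd rfl hi
  · exact ⟨1, one_mem _, by decide⟩
  · exact ⟨caseI_σ₁, h1, by decide⟩
  · exact ⟨caseI_σ₀, h0, by decide⟩
  · exact ⟨caseI_σ₀ * caseI_σ₀ * caseI_σ₁, mul_mem (mul_mem h0 h0) h1, by decide⟩
  · exact ⟨caseI_σ₁ * caseI_σ₀, mul_mem h1 h0, by decide⟩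
  · exact ⟨caseI_σ₁ * caseI_σ₀ * caseI_σ₀ * caseI_σ₁,
      mul_mem (mul_mem (mul_mem h1 h0) h0) h1, by decide⟩
  · exact ⟨caseI_σ₀ * caseI_σ₁, mul_mem h0 h1, by decide⟩
  · exact ⟨caseI_σ₀ * caseI_σ₀, mul_mem h0 h0, by decide⟩
  · exact ⟨caseI_σ₁ * caseI_σ₀ * caseI_σ₀, mul_mem (mul_mem h1 h0) h0, by decide⟩
  · exact ⟨caseI_σ₁ * caseI_σ₀ * caseI_σ₁, mul_mem (mul_mem h1 h0) h1, by decide⟩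
  · exact ⟨caseI_σ₀ * caseI_σ₁ * caseI_σ₀, mul_mem (mul_mem h0 h1) h0, by decide⟩
  · exact ⟨caseI_σ₁ * caseI_σ₀ * caseI_σ₁ * caseI_σ₀,
      mul_mem (mul_mem (mul_mem h1 h0) h1) h0, by decide⟩

/-- The subgroup generated by the case I monodromy permutations `σ₀` and `σ₁`
acts transitively on `{1, …, 12}`. -/
theorem caseI_monodromy_transitive :
    ∀ i j : Fin 13, i ≠ 0 → j ≠ 0 →
      ∃ g ∈ Subgroup.closure ({caseI_σ₀, caseI_σ₁} : Set (Equiv.Perm (Fin 13))), g i = j := by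
  intro i j hi hj
  obtain ⟨gi, hgi, hi1⟩ := caseI_reach_one i hi
  obtain ⟨gj, hgj, hj1⟩ := caseI_reach_one j hj
  refine ⟨gj * gi⁻¹, mul_mem hgj (inv_mem hgi), ?_⟩
  simp [← hi1, ← hj1]
end

section
/- The subgroup of S₂₄ generated by σ₀ = (1,3,8)(2,7,4)(5,14,9)(6,15,10)(11,16,12)(13,19,17)(18,23,20)(21,22,24) and σ₁ = (1,2)(3,5)(4,6)(7,11)(8,12)(9,13)(10,14)(15,17)(16,18)(19,21)(20,22)(23,24) has order 288 and trivial center. -/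
/-!
The group is enumerated by a breadth-first search of its Cayley graph with respect to `σ₀` and
`σ₁`, run by the kernel on permutations of `Fin 25` encoded as base-25 numerals. In a finite
group the subgroup generated by a set is the submonoid it generates, so once the search has
exhausted its frontier it lists exactly the codes of the elements of the group: 288 distinct
numbers. An element commuting with both generators is central, and among the listed elements only
the identity does.
-/

/-- Monodromy permutation above `j = 0` in case II, acting on `{1, …, 24} ⊂ Fin 25`. -/
def caseII_σ₀ : Equiv.Perm (Fin 25) :=
  c[1, 3, 8] * c[2, 7, 4] * c[5, 14, 9] * c[6, 15, 10] *
  c[11, 16, 12] * c[13, 19, 17] * c[18, 23, 20] * c[21, 22, 24]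

/-- Monodromy permutation above `j = 1728` in case II. -/
def caseII_σ₁ : Equiv.Perm (Fin 25) :=
  c[1, 2] * c[3, 5] * c[4, 6] * c[7, 11] * c[8, 12] * c[9, 13] *
  c[10, 14] * c[15, 17] * c[16, 18] * c[19, 21] * c[20, 22] * c[23, 24]

/-- The monodromy group of case II, generated by `σ₀` and `σ₁`. -/
def caseII_G : Subgroup (Equiv.Perm (Fin 25)) :=
  Subgroup.closure ({caseII_σ₀, caseII_σ₁} : Set (Equiv.Perm (Fin 25)))

section BreadthFirstSearch

variable {K : Type*} (mul : K → K → K) (gens : List K)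

def IsBFSState (seen frontier : List K) : Prop :=
  frontier ⊆ seen ∧ ∀ k ∈ seen, k ∉ frontier → ∀ s ∈ gens, mul k s ∈ seen

variable {mul gens} in
theorem isBFSState_singleton (e : K) : IsBFSState mul gens [e] [e] :=
  ⟨List.Subset.refl _, fun _ hk hk' => absurd hk hk'⟩

variable [DecidableEq K]

def bfsLayer (seen frontier : List K) : List K :=
  (frontier.flatMap fun k => gens.map (mul k)).dedup.filter (· ∉ seen)

def bfs : ℕ → List K → List K → List K × List K
  | 0, seen, frontier => (seen, frontier)
  | fuel + 1, seen, frontier =>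
    bfs fuel (seen ++ bfsLayer mul gens seen frontier) (bfsLayer mul gens seen frontier)

variable {mul gens}

theorem mem_bfsLayer {seen frontier : List K} {x : K} :
    x ∈ bfsLayer mul gens seen frontier ↔
      (∃ k ∈ frontier, ∃ s ∈ gens, mul k s = x) ∧ x ∉ seen := by
  simp [bfsLayer]

theorem bfs_induction (P : K → Prop) (hmul : ∀ k, ∀ s ∈ gens, P k → P (mul k s)) :
    ∀ (fuel : ℕ) (seen frontier : List K), (∀ k ∈ seen, P k) → (∀ k ∈ frontier, P k) →
      ∀ k ∈ (bfs mul gens fuel seen frontier).1, P k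
  | 0, _, _, hseen, _ => hseen
  | fuel + 1, seen, frontier, hseen, hfrontier => by
    have hlayer : ∀ x ∈ bfsLayer mul gens seen frontier, P x := by
      rintro x hx
      obtain ⟨⟨k, hk, s, hs, rfl⟩, -⟩ := mem_bfsLayer.mp hx
      exact hmul k s hs (hfrontier k hk)
    refine bfs_induction P hmul fuel _ _ ?_ hlayer
    simpa only [List.mem_append] using fun k hk => hk.elim (hseen k) (hlayer k)

theorem bfs_nodup : ∀ (fuel : ℕ) (seen frontier : List K), seen.Nodup →
    (bfs mul gens fuel seen frontier).1.Nodup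
  | 0, _, _, hseen => hseen
  | fuel + 1, seen, frontier, hseen => by
    refine bfs_nodup fuel _ _ (List.nodup_append.mpr ⟨hseen, ?_, ?_⟩)
    · exact (List.nodup_dedup _).filter _
    · rintro a ha b hb rfl
      exact (mem_bfsLayer.mp hb).2 ha

theorem IsBFSState.bfsLayer {seen frontier : List K} (h : IsBFSState mul gens seen frontier) :
    IsBFSState mul gens (seen ++ bfsLayer mul gens seen frontier)
      (bfsLayer mul gens seen frontier) := by
  refine ⟨List.subset_append_right _ _, fun k hk hnew s hs => ?_⟩
  have hk : k ∈ seen := (List.mem_append.mp hk).resolve_right hnew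
  by_cases hfr : k ∈ frontier
  · by_cases hks : mul k s ∈ seen
    · exact List.mem_append_left _ hks
    · exact List.mem_append_right _ (mem_bfsLayer.mpr ⟨⟨k, hfr, s, hs, rfl⟩, hks⟩)
  · exact List.mem_append_left _ (h.2 k hk hfr s hs)

theorem IsBFSState.bfs : ∀ {fuel : ℕ} {seen frontier : List K},
    IsBFSState mul gens seen frontier →
      IsBFSState mul gens (bfs mul gens fuel seen frontier).1 (bfs mul gens fuel seen frontier).2
  | 0, _, _, h => h
  | _ + 1, _, _, h => h.bfsLayer.bfs

theorem bfs_mul_mem {fuel : ℕ} {e : K} (hdone : (bfs mul gens fuel [e] [e]).2 = [])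
    {k : K} (hk : k ∈ (bfs mul gens fuel [e] [e]).1) {s : K} (hs : s ∈ gens) :
    mul k s ∈ (bfs mul gens fuel [e] [e]).1 :=
  (isBFSState_singleton e).bfs.2 k hk (by simp [hdone]) s hs

theorem mem_bfs_of_mem {fuel : ℕ} {seen frontier : List K} {k : K} (hk : k ∈ seen) :
    k ∈ (bfs mul gens fuel seen frontier).1 := by
  induction fuel generalizing seen frontier with
  | zero => exact hk
  | succ fuel ih => exact ih (List.mem_append_left _ hk)

end BreadthFirstSearch

theorem Nat.ofDigits_div_pow_mod {b : ℕ} {L : List ℕ} (hL : ∀ l ∈ L, l < b) {i : ℕ}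
    (hi : i < L.length) : Nat.ofDigits b L / b ^ i % b = L[i] := by
  have hb : 0 < b := (Nat.zero_le _).trans_lt (hL _ (List.getElem_mem hi))
  rw [Nat.ofDigits_div_pow_eq_ofDigits_drop i hb L hL, List.drop_eq_getElem_cons hi,
    Nat.ofDigits_cons, Nat.add_mul_mod_self_left, Nat.mod_eq_of_lt (hL _ (List.getElem_mem hi))]

section PermCode

open Equiv

variable {n : ℕ}

def permCode (σ : Perm (Fin n)) : ℕ :=
  Nat.ofDigits n (List.ofFn fun i => (σ i : ℕ))

def permCodeMul (n x y : ℕ) : ℕ :=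
  Nat.ofDigits n ((List.range n).map fun i => x / n ^ (y / n ^ i % n) % n)

theorem permCode_div_pow_mod (σ : Perm (Fin n)) (i : Fin n) :
    permCode σ / n ^ (i : ℕ) % n = σ i := by
  rw [permCode, Nat.ofDigits_div_pow_mod] <;> simp

theorem permCode_injective : Function.Injective (permCode (n := n)) := fun σ τ h =>
  Equiv.ext fun i => Fin.ext <| by rw [← permCode_div_pow_mod, h, permCode_div_pow_mod]

theorem permCode_mul (σ τ : Perm (Fin n)) :
    permCode (σ * τ) = permCodeMul n (permCode σ) (permCode τ) := by
  rw [permCode, permCodeMul]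
  congr 1
  refine List.ext_getElem (by simp) fun i h _ => ?_
  simp only [List.length_ofFn] at h
  simp only [List.getElem_ofFn, List.getElem_map, List.getElem_range, Perm.mul_apply]
  rw [show permCode τ / n ^ i % n = τ ⟨i, h⟩ from permCode_div_pow_mod τ ⟨i, h⟩,
    permCode_div_pow_mod]

theorem permCode_one : permCode (1 : Perm (Fin n)) = Nat.ofDigits n (List.range n) := by
  rw [permCode, List.ofFn_eq_map]
  simp

end PermCode

section PermEnum

open Equiv

variable {n : ℕ} (S : List (Perm (Fin n))) (fuel : ℕ)

def permEnum : List ℕ × List ℕ :=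
  bfs (permCodeMul n) (S.map permCode) fuel [permCode (1 : Perm (Fin n))]
    [permCode (1 : Perm (Fin n))]

variable {S fuel}

theorem exists_mem_closure_of_mem_permEnum {k : ℕ} (hk : k ∈ (permEnum S fuel).1) :
    ∃ σ ∈ Subgroup.closure {σ | σ ∈ S}, permCode σ = k := by
  rw [permEnum] at hk
  refine bfs_induction (fun k => ∃ σ ∈ Subgroup.closure {σ | σ ∈ S}, permCode σ = k) ?_
    fuel _ _ ?_ ?_ k hk
  · rintro _ _ hc ⟨σ, hσ, rfl⟩
    obtain ⟨τ, hτ, rfl⟩ := List.mem_map.mp hc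
    exact ⟨σ * τ, mul_mem hσ (Subgroup.subset_closure hτ), permCode_mul σ τ⟩
  all_goals simpa using ⟨1, one_mem _, rfl⟩

theorem permCode_mem_permEnum (hdone : (permEnum S fuel).2 = []) {σ : Perm (Fin n)}
    (hσ : σ ∈ Subgroup.closure {σ | σ ∈ S}) : permCode σ ∈ (permEnum S fuel).1 := by
  rw [← Subgroup.mem_toSubmonoid, Subgroup.closure_toSubmonoid_of_finite] at hσ
  induction hσ using Submonoid.closure_induction_right with
  | one => exact mem_bfs_of_mem (List.mem_singleton_self _)
  | mul_right σ _ τ hτ ih =>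
    rw [permCode_mul]
    exact bfs_mul_mem (gens := S.map permCode) hdone ih (List.mem_map_of_mem hτ)

theorem permCode_image_closure (hdone : (permEnum S fuel).2 = []) :
    permCode '' (Subgroup.closure {σ | σ ∈ S} : Set (Perm (Fin n))) =
      {k | k ∈ (permEnum S fuel).1} := by
  ext k
  constructor
  · rintro ⟨σ, hσ, rfl⟩
    exact permCode_mem_permEnum hdone hσ
  · exact exists_mem_closure_of_mem_permEnum

theorem card_closure_eq_length (hdone : (permEnum S fuel).2 = []) :
    Nat.card (Subgroup.closure {σ | σ ∈ S}) = (permEnum S fuel).1.length := by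
  have hnodup : (permEnum S fuel).1.Nodup := bfs_nodup fuel _ _ (List.nodup_singleton _)
  calc Nat.card (Subgroup.closure {σ | σ ∈ S})
      = Nat.card (permCode '' (Subgroup.closure {σ | σ ∈ S} : Set (Perm (Fin n)))) :=
        (Nat.card_image_of_injective permCode_injective _).symm
    _ = Nat.card (permEnum S fuel).1.toFinset := by
        rw [permCode_image_closure hdone]
        simp
    _ = (permEnum S fuel).1.length := by
        rw [Nat.card_eq_finsetCard, List.toFinset_card_of_nodup hnodup]

theorem center_closure_eq_bot (hdone : (permEnum S fuel).2 = [])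
    (hcentral : ∀ k ∈ (permEnum S fuel).1,
      (∀ c ∈ S.map permCode, permCodeMul n k c = permCodeMul n c k) →
        k = permCode (1 : Perm (Fin n))) :
    Subgroup.center (Subgroup.closure {σ | σ ∈ S}) = ⊥ := by
  refine (Subgroup.eq_bot_iff_forall _).mpr fun σ hσ => Subtype.ext <| permCode_injective ?_
  refine hcentral _ (permCode_mem_permEnum hdone σ.2) fun c hc => ?_
  obtain ⟨τ, hτ, rfl⟩ := List.mem_map.mp hc
  have hcomm := congrArg Subtype.val
    (Subgroup.mem_center_iff.mp hσ ⟨τ, Subgroup.subset_closure hτ⟩)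
  rw [← permCode_mul, ← permCode_mul]
  exact congrArg permCode hcomm.symm

end PermEnum

-- Rewriting the generators to numerals first keeps the kernel from re-evaluating
-- `permCode caseII_σ₀` at every step of the searches below.
theorem caseII_permCodes : [caseII_σ₀, caseII_σ₁].map permCode =
    [Nat.ofDigits 25 [0, 3, 7, 8, 2, 14, 15, 4, 1, 5, 6, 16, 11, 19, 9, 10, 12, 13, 23, 17, 18,
        22, 24, 20, 21],
      Nat.ofDigits 25 [0, 2, 1, 5, 6, 3, 4, 11, 12, 13, 14, 7, 8, 9, 10, 17, 18, 15, 16, 21, 22,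
        19, 20, 24, 23]] := by
  decide +kernel

-- Every element of `caseII_G` is a word of length at most 17 in `σ₀, σ₁`.
theorem caseII_permEnum_snd_eq_nil : (permEnum [caseII_σ₀, caseII_σ₁] 18).2 = [] := by
  rw [permEnum, caseII_permCodes, permCode_one]
  decide +kernel

theorem caseII_permEnum_length : (permEnum [caseII_σ₀, caseII_σ₁] 18).1.length = 288 := by
  rw [permEnum, caseII_permCodes, permCode_one]
  decide +kernel

theorem caseII_permEnum_eq_one_of_commute : ∀ k ∈ (permEnum [caseII_σ₀, caseII_σ₁] 18).1,
    (∀ c ∈ [caseII_σ₀, caseII_σ₁].map permCode, permCodeMul 25 k c = permCodeMul 25 c k) →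
      k = permCode (1 : Equiv.Perm (Fin 25)) := by
  rw [permEnum, caseII_permCodes, permCode_one]
  decide +kernel

/-- The monodromy group of case II has order `288` and trivial center. -/
theorem caseII_monodromy_group_card_and_center :
    Nat.card caseII_G = 288 ∧ Subgroup.center caseII_G = ⊥ := by
  have hG : caseII_G = Subgroup.closure {σ | σ ∈ [caseII_σ₀, caseII_σ₁]} := by
    rw [caseII_G]
    congr 1
    ext
    simp
  rw [hG]
  exact ⟨(card_closure_eq_length caseII_permEnum_snd_eq_nil).trans caseII_permEnum_length,
    center_closure_eq_bot caseII_permEnum_snd_eq_nil caseII_permEnum_eq_one_of_commute⟩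
end

section
/- For the rational functions b(x) = (-27/4)·x²·(x-1), c(x) = (-8·b(x) - 1)/(4·b(x) - 4), and g(x) = 6912·x³·(x+2)/(4x-1), the composition g(c(x)), after substituting x/3 for x, equals 6912·(2x³ - 6x² - 1)³ / ((x-2)⁶·(x+1)³·x²·(x-3)) as rational functions over ℚ. -/
open RatFunc

noncomputable section

/-- The degree 3 Belyĭ map `b(x) = (-27/4) x² (x - 1)`, precomposed with `x ↦ x/3`. -/
def caseII_b3 : RatFunc ℚ :=
  ((-27/4 : ℚ) : RatFunc ℚ) * (RatFunc.X / 3) ^ 2 * (RatFunc.X / 3 - 1)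

/-- The Möbius-moved map `c(x) = (-8 b(x) - 1)/(4 b(x) - 4)`, precomposed with `x ↦ x/3`. -/
def caseII_c3 : RatFunc ℚ :=
  (-8 * caseII_b3 - 1) / (4 * caseII_b3 - 4)

/-- The degree 4 map `g(x) = 6912 x³ (x + 2)/(4x - 1)` evaluated at `c(x/3)`,
i.e. the composition `g ∘ c` precomposed with `x ↦ x/3`. -/
def caseII_gc3 : RatFunc ℚ :=
  6912 * caseII_c3 ^ 3 * (caseII_c3 + 2) / (4 * caseII_c3 - 1)

/-! After the substitution `x ↦ x/3` everything is expressed through `N = 2x³ - 6x² - 1` and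
`D = (x - 2)²(x + 1) = x³ - 3x² + 4`: one has `-8b - 1 = N` and `4b - 4 = -D`, so `c = -N/D`,
and then `c + 2 = 9/D` and `4c - 1 = -9x²(x - 3)/D`. Substituting these into `g` the powers of
`D` and the factors `9` collapse to the stated quotient. -/

theorem RatFunc.X_sub_C_ne_zero {K : Type*} [Field K] (a : K) : (X : RatFunc K) - C a ≠ 0 := by
  rw [← algebraMap_X, ← algebraMap_C, ← map_sub]
  exact algebraMap_ne_zero (Polynomial.X_sub_C_ne_zero a)

lemma X_sub_two_ne_zero : (X - 2 : RatFunc ℚ) ≠ 0 := by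
  simpa using RatFunc.X_sub_C_ne_zero (2 : ℚ)

lemma X_sub_three_ne_zero : (X - 3 : RatFunc ℚ) ≠ 0 := by
  simpa using RatFunc.X_sub_C_ne_zero (3 : ℚ)

lemma X_add_one_ne_zero : (X + 1 : RatFunc ℚ) ≠ 0 := by
  simpa using RatFunc.X_sub_C_ne_zero (-1 : ℚ)

lemma X_sub_two_sq_mul_X_add_one_ne_zero : ((X - 2) ^ 2 * (X + 1) : RatFunc ℚ) ≠ 0 :=
  mul_ne_zero (pow_ne_zero 2 X_sub_two_ne_zero) X_add_one_ne_zero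

lemma caseII_b3_eq : caseII_b3 = -(X ^ 2 * (X - 3)) / 4 := by
  rw [caseII_b3, Rat.cast_div, Rat.cast_neg, Rat.cast_ofNat, Rat.cast_ofNat]
  ring

lemma caseII_c3_eq :
    caseII_c3 = -(2 * X ^ 3 - 6 * X ^ 2 - 1) / ((X - 2) ^ 2 * (X + 1)) := by
  have hden : 4 * caseII_b3 - 4 = -((X - 2) ^ 2 * (X + 1)) := by rw [caseII_b3_eq]; ring
  have hnum : -8 * caseII_b3 - 1 = 2 * X ^ 3 - 6 * X ^ 2 - 1 := by rw [caseII_b3_eq]; ring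
  rw [caseII_c3, hden, hnum, div_neg, neg_div]

lemma caseII_c3_add_two : caseII_c3 + 2 = 9 / ((X - 2) ^ 2 * (X + 1)) := by
  rw [caseII_c3_eq, div_add' _ _ _ X_sub_two_sq_mul_X_add_one_ne_zero]
  ring

lemma caseII_c3_mul_four_sub_one :
    4 * caseII_c3 - 1 = -(9 * X ^ 2 * (X - 3)) / ((X - 2) ^ 2 * (X + 1)) := by
  rw [caseII_c3_eq, mul_div_assoc', div_sub' X_sub_two_sq_mul_X_add_one_ne_zero]
  ring

/-- The composition `g(c(x))`, after substituting `x/3` for `x`, equals the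
case II Belyĭ map `6912 (2x³ - 6x² - 1)³ / ((x-2)⁶ (x+1)³ x² (x-3))` in `ℚ(x)`. -/
theorem caseII_belyi_decomposition :
    caseII_gc3 =
      6912 * (2 * RatFunc.X ^ 3 - 6 * RatFunc.X ^ 2 - 1) ^ 3 /
        ((RatFunc.X - 2) ^ 6 * (RatFunc.X + 1) ^ 3 * RatFunc.X ^ 2 * (RatFunc.X - 3)) := by
  rw [caseII_gc3, caseII_c3_add_two, caseII_c3_mul_four_sub_one, caseII_c3_eq]
  field_simp [X_sub_two_ne_zero, X_add_one_ne_zero, X_sub_three_ne_zero, RatFunc.X_ne_zero]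

end
end
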